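/- arXiv:1810.12861 — 2 statements merged into one kernel-verified Lean document; each statement's English description precedes it below -/
import Mathlib

section
/- Let N be a finite ground set, (N, 𝓜) a matroid of rank K, Z a monotone, submodular, normalized set function on N, c ∈ [0,1] a curvature bound for Z, and g a greedy sequence for (Z, 𝓜) with output G and increments ρ_i = ρ_{g_i}(G^{i−1}). Let d ≥ 1 be a real number such that for every i ∈ {1, …, K} with |{x ∈ N ∖ G^{i−1} : G^{i−1} ∪ {x} ∈ 𝓜}| > K − i + 1 (i.e., every iteration i < i_0), and for every x ∈ N ∖ G^{i−1} with x ≠ g_i and G^{i−1} ∪ {x} ∈ 𝓜, one has d·ρ_x(G^{i−1}) ≤ ρ_i (so d is a lower bound on the minimum discriminant d_min). Then for every Ω ∈ 𝓜, max(1, c + 1/d)·Z(G) ≥ Z(Ω); equivalently, Z(G)/Z(Ω) ≥ min(1, 1/(c + 1/d)) whenever Z(Ω) > 0. -/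
/-!
Extend `Ω` to a basis `T ⊇ Ω`. Augmenting each prefix `G^{i-1}` from `T` and applying Hall's
theorem gives a bijection `σ` from `P = {i | g i ∉ T}` to `T \ G` with `G^{i-1} ∪ {σ i}`
independent. At such a step `σ i, g i, …, g K` are `K - i + 2` feasible candidates, so the
discriminant bound applies: `d · ρ_{σ i}(G) ≤ d · ρ_{σ i}(G^{i-1}) ≤ ρ_i`. With `s = ∑_{i ∈ P} ρ_i`,
submodularity gives `Z(T ∪ G) ≤ Z(G) + s / d` and curvature gives
`Z(T ∪ G) ≥ Z(T) + (1 - c) · ∑_{w ∈ G \ T} ρ_w(∅) ≥ Z(T) + (1 - c) · s`.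
Hence `Z(Ω) ≤ Z(T) ≤ Z(G) + (c + 1/d - 1) · s` with `0 ≤ s ≤ Z(G)`.
-/

open Finset

/-- Marginal gain of adding `q` to `S`: `ρ_q(S) = Z(S ∪ {q}) − Z(S)`. -/
def marg {α : Type*} [DecidableEq α] (Z : Finset α → ℝ) (q : α) (S : Finset α) : ℝ :=
  Z (insert q S) - Z S

/-- The set `{g 1, …, g i}` of the first `i` elements of the sequence `g`. -/
def initSeg {α : Type*} [DecidableEq α] (g : ℕ → α) (i : ℕ) : Finset α :=
  (Finset.Icc 1 i).image g

theorem le_max_one_mul_of_le_add_sub_one_mul {x y s t : ℝ} (h : x ≤ y + (t - 1) * s)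
    (hs : 0 ≤ s) (hsy : s ≤ y) : x ≤ max 1 t * y := by
  rcases le_total t 1 with ht | ht
  · rw [max_eq_left ht]
    nlinarith
  · rw [max_eq_right ht]
    nlinarith

theorem exists_injOn_mem_of_card_filter_le {ι β : Type*} [LinearOrder ι] [Nonempty β]
    {P : Finset ι} {B : ι → Finset β} (hB : ∀ i ∈ P, #{j ∈ P | i ≤ j} ≤ #(B i)) :
    ∃ σ : ι → β, Set.InjOn σ P ∧ ∀ i ∈ P, σ i ∈ B i := by
  classical
  -- Hall's condition: a set of indices with least element `m` has at most
  -- `#{j ∈ P | m ≤ j} ≤ #(B m)` elements.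
  obtain ⟨f, hf, hfB⟩ := (all_card_le_biUnion_card_iff_exists_injective fun i : P => B i).1
    fun s => by
      rcases s.eq_empty_or_nonempty with rfl | hs
      · simp
      obtain ⟨m, hm, hmin⟩ := s.exists_min_image Subtype.val hs
      calc #s = #(s.map (Function.Embedding.subtype _)) := (card_map _).symm
        _ ≤ #{j ∈ P | (m : ι) ≤ j} := card_le_card fun j hj => by
          obtain ⟨j, hj', rfl⟩ := mem_map.1 hj
          exact mem_filter.2 ⟨j.2, hmin j hj'⟩
        _ ≤ #(B m) := hB m m.2
        _ ≤ #(s.biUnion fun i => B i) := card_le_card (subset_biUnion_of_mem (fun i : P => B i) hm)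
  refine ⟨fun i => if h : i ∈ P then f ⟨i, h⟩ else Classical.arbitrary β, ?_, fun i hi => ?_⟩
  · intro i hi j hj hij
    simp only [mem_coe] at hi hj
    exact congrArg Subtype.val (hf (by simpa [hi, hj] using hij))
  · simpa [hi] using hfB ⟨i, hi⟩

section

variable {α : Type*} [DecidableEq α]

section SetFunction

variable {Z : Finset α → ℝ} {S W : Finset α}

theorem sub_le_sum_of_marg_le {u : α → ℝ}
    (h : ∀ a ∈ W, ∀ V ⊆ W, a ∉ V → marg Z a (S ∪ V) ≤ u a) :
    Z (S ∪ W) - Z S ≤ ∑ a ∈ W, u a := by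
  induction W using Finset.induction_on with
  | empty => simp
  | insert a W ha ih =>
    have hstep := h a (mem_insert_self a W) W (subset_insert a W) ha
    have hrest := ih fun b hb V hV hbV =>
      h b (mem_insert_of_mem hb) V (hV.trans (subset_insert a W)) hbV
    rw [marg, ← union_insert] at hstep
    rw [sum_insert ha]
    linarith

theorem sum_le_sub_of_le_marg {l : α → ℝ}
    (h : ∀ a ∈ W, ∀ V ⊆ W, a ∉ V → l a ≤ marg Z a (S ∪ V)) :
    ∑ a ∈ W, l a ≤ Z (S ∪ W) - Z S := by
  have := sub_le_sum_of_marg_le (Z := fun s => -Z s) (u := fun a => -l a)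
    fun a ha V hV haV => by
      have := h a ha V hV haV
      simp only [marg] at this ⊢
      linarith
  simp only [sum_neg_distrib] at this
  linarith

variable {N : Finset α}

theorem marg_nonneg (hZ_mono : ∀ S T : Finset α, S ⊆ T → T ⊆ N → Z S ≤ Z T)
    (hS : S ⊆ N) {j : α} (hj : j ∈ N) : 0 ≤ marg Z j S :=
  sub_nonneg.2 (hZ_mono _ _ (subset_insert j S) (insert_subset hj hS))

theorem mul_marg_empty_le_marg (hZ_mono : ∀ S T : Finset α, S ⊆ T → T ⊆ N → Z S ≤ Z T)
    {c : ℝ} (hc : c ≤ 1)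
    (hcurv : ∀ S ⊆ N, ∀ j ∈ N, j ∉ S → 0 < marg Z j ∅ → (1 - c) * marg Z j ∅ ≤ marg Z j S)
    (hS : S ⊆ N) {j : α} (hj : j ∈ N) (hjS : j ∉ S) :
    (1 - c) * marg Z j ∅ ≤ marg Z j S := by
  rcases lt_or_ge 0 (marg Z j ∅) with hpos | hnonpos
  · exact hcurv S hS j hj hjS hpos
  · nlinarith [marg_nonneg hZ_mono hS hj]

theorem le_add_sum_marg_sub_mul_sum_marg_empty
    (hZ_mono : ∀ S T : Finset α, S ⊆ T → T ⊆ N → Z S ≤ Z T)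
    (hZ_submod : ∀ S T : Finset α, ∀ x, S ⊆ T → T ⊆ N → x ∈ N → x ∉ T →
      Z (insert x T) - Z T ≤ Z (insert x S) - Z S)
    {c : ℝ} (hc : c ≤ 1)
    (hcurv : ∀ S ⊆ N, ∀ j ∈ N, j ∉ S → 0 < marg Z j ∅ → (1 - c) * marg Z j ∅ ≤ marg Z j S)
    {T : Finset α} (hS : S ⊆ N) (hT : T ⊆ N) :
    Z T ≤ Z S + ∑ w ∈ T \ S, marg Z w S - (1 - c) * ∑ w ∈ S \ T, marg Z w ∅ := by
  have hunion : T ∪ (S \ T) = S ∪ (T \ S) := by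
    rw [union_sdiff_self_eq_union, union_sdiff_self_eq_union, union_comm]
  have hup : Z (S ∪ (T \ S)) - Z S ≤ ∑ w ∈ T \ S, marg Z w S := by
    refine sub_le_sum_of_marg_le fun a ha V hV haV => ?_
    have ha' := mem_sdiff.1 ha
    exact hZ_submod S (S ∪ V) a subset_union_left
      (union_subset hS (hV.trans (sdiff_subset.trans hT))) (hT ha'.1) (by simp [ha'.2, haV])
  have hlow : ∑ w ∈ S \ T, (1 - c) * marg Z w ∅ ≤ Z (T ∪ (S \ T)) - Z T := by
    refine sum_le_sub_of_le_marg fun a ha V hV haV => ?_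
    have ha' := mem_sdiff.1 ha
    exact mul_marg_empty_le_marg hZ_mono hc hcurv
      (union_subset hT (hV.trans (sdiff_subset.trans hS))) (hS ha'.1) (by simp [ha'.2, haV])
  rw [← mul_sum, hunion] at hlow
  linarith

end SetFunction

section Matroid

variable {M : Finset α → Prop}

theorem exists_superset_subset_union_card_eq
    (hM_aug : ∀ S T : Finset α, M S → M T → S.card < T.card → ∃ x ∈ T \ S, M (insert x S))
    {S T : Finset α} (hS : M S) (hT : M T) (hST : #S ≤ #T) :
    ∃ S', S ⊆ S' ∧ S' ⊆ S ∪ T ∧ #S' = #T ∧ M S' := by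
  obtain ⟨n, hn⟩ := Nat.exists_eq_add_of_le hST
  induction n generalizing S with
  | zero => exact ⟨S, subset_rfl, subset_union_left, hn.symm, hS⟩
  | succ n ih =>
    obtain ⟨x, hx, hxS⟩ := hM_aug S T hS hT (by omega)
    have hx' := mem_sdiff.1 hx
    obtain ⟨S', hxS', hS'T, hcard, hS'⟩ := ih hxS
      (by rw [card_insert_of_notMem hx'.2]; omega) (by rw [card_insert_of_notMem hx'.2]; omega)
    refine ⟨S', (subset_insert x S).trans hxS', hS'T.trans ?_, hcard, hS'⟩
    rw [insert_union]
    exact insert_subset (mem_union_right S hx'.1) subset_rfl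

theorem card_sub_card_le_card_filter_insert [DecidablePred M]
    (hM_aug : ∀ S T : Finset α, M S → M T → S.card < T.card → ∃ x ∈ T \ S, M (insert x S))
    (hM_down : ∀ S T : Finset α, M T → S ⊆ T → M S) {I T : Finset α} (hI : M I) (hT : M T) :
    #T - #I ≤ #{x ∈ T \ I | M (insert x I)} := by
  rcases le_total #T #I with hTI | hIT
  · simp [Nat.sub_eq_zero_of_le hTI]
  obtain ⟨S, hIS, hST, hcard, hS⟩ := exists_superset_subset_union_card_eq hM_aug hI hT hIT
  calc #T - #I = #(S \ I) := by rw [card_sdiff_of_subset hIS, hcard]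
    _ ≤ _ := card_le_card fun x hx => by
      have hx' := mem_sdiff.1 hx
      refine mem_filter.2 ⟨mem_sdiff.2 ⟨(mem_union.1 (hST hx'.1)).resolve_left hx'.2, hx'.2⟩, ?_⟩
      exact hM_down _ _ hS (insert_subset hx'.1 hIS)

end Matroid

section InitSeg

variable (g : ℕ → α) {i j K : ℕ}

theorem initSeg_mono (h : i ≤ j) : initSeg g i ⊆ initSeg g j :=
  image_subset_image (Icc_subset_Icc_right h)

theorem insert_initSeg_pred (hi : 1 ≤ i) : insert (g i) (initSeg g (i - 1)) = initSeg g i := by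
  rw [initSeg, initSeg, ← image_insert]
  congr 1
  ext j
  simp only [mem_insert, mem_Icc]
  omega

theorem sum_marg_initSeg {Z : Finset α → ℝ} (hZ : Z ∅ = 0) (k : ℕ) :
    ∑ i ∈ Icc 1 k, marg Z (g i) (initSeg g (i - 1)) = Z (initSeg g k) := by
  induction k with
  | zero => simp [initSeg, hZ]
  | succ k ih =>
    rw [sum_Icc_succ_top (by omega), ih, marg, insert_initSeg_pred g (by omega),
      Nat.add_sub_cancel]
    ring

theorem initSeg_sdiff_eq_image (T : Finset α) :
    initSeg g K \ T = {i ∈ Icc 1 K | g i ∉ T}.image g := by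
  rw [initSeg, sdiff_eq_filter, filter_image]

variable {g}

theorem card_initSeg (hg : Set.InjOn g (Set.Icc 1 K)) (hi : i ≤ K) : #(initSeg g i) = i := by
  rw [initSeg, card_image_of_injOn, Nat.card_Icc, Nat.add_sub_cancel]
  exact hg.mono fun j hj => by simp only [coe_Icc, Set.mem_Icc] at hj ⊢; omega

theorem initSeg_sdiff_initSeg_pred (hg : Set.InjOn g (Set.Icc 1 K)) (hi : 1 ≤ i) :
    initSeg g K \ initSeg g (i - 1) = (Icc i K).image g := by
  ext x
  simp only [initSeg, mem_sdiff, mem_image, mem_Icc]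
  constructor
  · rintro ⟨⟨j, hj, rfl⟩, hnot⟩
    exact ⟨j, ⟨not_lt.1 fun hji => hnot ⟨j, ⟨hj.1, by omega⟩, rfl⟩, hj.2⟩, rfl⟩
  · rintro ⟨j, hj, rfl⟩
    refine ⟨⟨j, ⟨by omega, hj.2⟩, rfl⟩, ?_⟩
    rintro ⟨j', hj', hjj'⟩
    have := hg ⟨hj'.1, by omega⟩ ⟨by omega, hj.2⟩ hjj'
    omega

theorem apply_notMem_initSeg_pred (hg : Set.InjOn g (Set.Icc 1 K)) (hi : i ∈ Icc 1 K) :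
    g i ∉ initSeg g (i - 1) := by
  have : g i ∈ initSeg g K \ initSeg g (i - 1) := by
    rw [initSeg_sdiff_initSeg_pred hg (mem_Icc.1 hi).1]
    exact mem_image_of_mem g (mem_Icc.2 ⟨le_rfl, (mem_Icc.1 hi).2⟩)
  exact (mem_sdiff.1 this).2

end InitSeg

section Greedy

variable {M : Finset α → Prop} {N : Finset α} {Z : Finset α → ℝ} {K : ℕ} {g : ℕ → α}

theorem marg_initSeg_pred_nonneg (hZ_mono : ∀ S T : Finset α, S ⊆ T → T ⊆ N → Z S ≤ Z T)
    (hGN : initSeg g K ⊆ N) {i : ℕ} (hi : i ∈ Icc 1 K) :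
    0 ≤ marg Z (g i) (initSeg g (i - 1)) :=
  marg_nonneg hZ_mono ((initSeg_mono g (by simp at hi; omega)).trans hGN)
    (hGN (mem_image_of_mem g hi))

theorem sum_marg_initSeg_le (hZ_mono : ∀ S T : Finset α, S ⊆ T → T ⊆ N → Z S ≤ Z T)
    (hZ_empty : Z ∅ = 0) (hGN : initSeg g K ⊆ N) {P : Finset ℕ} (hP : P ⊆ Icc 1 K) :
    ∑ i ∈ P, marg Z (g i) (initSeg g (i - 1)) ≤ Z (initSeg g K) := by
  rw [← sum_marg_initSeg g hZ_empty K]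
  exact sum_le_sum_of_subset_of_nonneg hP fun i hi _ => marg_initSeg_pred_nonneg hZ_mono hGN hi

theorem sum_marg_le_sum_marg_empty
    (hZ_submod : ∀ S T : Finset α, ∀ x, S ⊆ T → T ⊆ N → x ∈ N → x ∉ T →
      Z (insert x T) - Z T ≤ Z (insert x S) - Z S)
    (hg : Set.InjOn g (Set.Icc 1 K)) (hGN : initSeg g K ⊆ N) (T : Finset α) :
    ∑ i ∈ Icc 1 K with g i ∉ T, marg Z (g i) (initSeg g (i - 1)) ≤
      ∑ w ∈ initSeg g K \ T, marg Z w ∅ := by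
  rw [initSeg_sdiff_eq_image, sum_image (hg.mono fun i hi => by simp_all)]
  refine sum_le_sum fun i hi => ?_
  have hi := (mem_filter.1 hi).1
  simpa [marg] using hZ_submod ∅ _ (g i) (empty_subset _)
    ((initSeg_mono g (by simp at hi; omega)).trans hGN) (hGN (mem_image_of_mem g hi))
    (apply_notMem_initSeg_pred hg hi)

/-- The elements of `T` that can be added to `G^{i-1}` number at least `K - i + 1`; those lying
in `G` are among the `g j ∈ T` with `j ≥ i`, and the rest form the right-hand side. -/
theorem card_filter_notMem_le_card_filter_insert [DecidablePred M]
    (hM_aug : ∀ S T : Finset α, M S → M T → S.card < T.card → ∃ x ∈ T \ S, M (insert x S))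
    (hM_down : ∀ S T : Finset α, M T → S ⊆ T → M S)
    (hg : Set.InjOn g (Set.Icc 1 K)) (hG : M (initSeg g K)) {T : Finset α} (hT : M T)
    (hTcard : #T = K) {i : ℕ} (hi : 1 ≤ i) (hiK : i ≤ K) :
    #{j ∈ Icc i K | g j ∉ T} ≤ #{x ∈ T \ initSeg g K | M (insert x (initSeg g (i - 1)))} := by
  have hfeas := card_sub_card_le_card_filter_insert hM_aug hM_down
    (hM_down _ _ hG (initSeg_mono g (by omega) : initSeg g (i - 1) ⊆ _)) hT
  rw [hTcard, card_initSeg hg (by omega)] at hfeas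
  have hsplit : {x ∈ T \ initSeg g (i - 1) | M (insert x (initSeg g (i - 1)))} ⊆
      {x ∈ T \ initSeg g K | M (insert x (initSeg g (i - 1)))} ∪
        {j ∈ Icc i K | g j ∈ T}.image g := by
    intro x hx
    obtain ⟨hxT, hxI⟩ := mem_sdiff.1 (mem_filter.1 hx).1
    by_cases hxG : x ∈ initSeg g K
    · have hx' : x ∈ initSeg g K \ initSeg g (i - 1) := mem_sdiff.2 ⟨hxG, hxI⟩
      rw [initSeg_sdiff_initSeg_pred hg hi] at hx'
      obtain ⟨j, hj, rfl⟩ := mem_image.1 hx'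
      exact mem_union_right _ (mem_image_of_mem g (mem_filter.2 ⟨hj, hxT⟩))
    · exact mem_union_left _ (mem_filter.2 ⟨mem_sdiff.2 ⟨hxT, hxG⟩, (mem_filter.1 hx).2⟩)
  have hcount := card_filter_add_card_filter_not (s := Icc i K) (g · ∈ T)
  rw [Nat.card_Icc] at hcount
  have := (card_le_card hsplit).trans (card_union_le _ _)
  have := card_image_le (s := {j ∈ Icc i K | g j ∈ T}) (f := g)
  omega

theorem exists_exchange_injOn [DecidablePred M]
    (hM_aug : ∀ S T : Finset α, M S → M T → S.card < T.card → ∃ x ∈ T \ S, M (insert x S))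
    (hM_down : ∀ S T : Finset α, M T → S ⊆ T → M S)
    (hg : Set.InjOn g (Set.Icc 1 K)) (hG : M (initSeg g K)) {T : Finset α} (hT : M T)
    (hTcard : #T = K) :
    ∃ σ : ℕ → α, Set.InjOn σ ↑({i ∈ Icc 1 K | g i ∉ T} : Finset ℕ) ∧
      {i ∈ Icc 1 K | g i ∉ T}.image σ = T \ initSeg g K ∧
      ∀ i ∈ {i ∈ Icc 1 K | g i ∉ T}, M (insert (σ i) (initSeg g (i - 1))) := by
  have : Nonempty α := ⟨g 0⟩
  set P := {i ∈ Icc 1 K | g i ∉ T}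
  obtain ⟨σ, hσ, hσB⟩ := exists_injOn_mem_of_card_filter_le
    (B := fun i => {x ∈ T \ initSeg g K | M (insert x (initSeg g (i - 1)))}) (P := P)
    fun i hi => by
      obtain ⟨hi1, hiK⟩ := mem_Icc.1 (mem_filter.1 hi).1
      refine le_trans (card_le_card fun j hj => ?_)
        (card_filter_notMem_le_card_filter_insert hM_aug hM_down hg hG hT hTcard hi1 hiK)
      simp only [P, mem_filter, mem_Icc] at hj ⊢
      exact ⟨⟨hj.2, hj.1.1.2⟩, hj.1.2⟩
  have hmaps : P.image σ ⊆ T \ initSeg g K := fun x hx => by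
    obtain ⟨i, hi, rfl⟩ := mem_image.1 hx
    exact (mem_filter.1 (hσB i hi)).1
  have hPcard : #P = #(T \ initSeg g K) := by
    rw [← card_sdiff_comm (by rw [hTcard, card_initSeg hg le_rfl]), initSeg_sdiff_eq_image,
      card_image_of_injOn (hg.mono fun i hi => by simp_all [P])]
  refine ⟨σ, hσ, eq_of_subset_of_card_le hmaps ?_, fun i hi => (mem_filter.1 (hσB i hi)).2⟩
  rw [card_image_of_injOn hσ, hPcard]

theorem lt_card_filter_insert_initSeg [DecidablePred M]
    (hM_ground : ∀ S, M S → S ⊆ N) (hM_down : ∀ S T : Finset α, M T → S ⊆ T → M S)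
    (hg : Set.InjOn g (Set.Icc 1 K)) (hG : M (initSeg g K)) {i : ℕ} (hi : i ∈ Icc 1 K)
    {x : α} (hxN : x ∈ N) (hxG : x ∉ initSeg g K) (hxM : M (insert x (initSeg g (i - 1)))) :
    K - i + 1 < #{y ∈ N \ initSeg g (i - 1) | M (insert y (initSeg g (i - 1)))} := by
  have hi' := mem_Icc.1 hi
  have hsub : insert x (initSeg g K \ initSeg g (i - 1)) ⊆
      {y ∈ N \ initSeg g (i - 1) | M (insert y (initSeg g (i - 1)))} := by
    refine insert_subset (mem_filter.2 ⟨mem_sdiff.2 ⟨hxN, fun h => hxG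
      (initSeg_mono g (by omega) h)⟩, hxM⟩) fun y hy => ?_
    obtain ⟨hyG, hyI⟩ := mem_sdiff.1 hy
    exact mem_filter.2 ⟨mem_sdiff.2 ⟨hM_ground _ hG hyG, hyI⟩,
      hM_down _ _ hG (insert_subset hyG (initSeg_mono g (by omega)))⟩
  have := card_le_card hsub
  rw [card_insert_of_notMem fun h => hxG (mem_sdiff.1 h).1,
    card_sdiff_of_subset (initSeg_mono g (by omega)), card_initSeg hg le_rfl,
    card_initSeg hg (by omega)] at this
  omega

theorem sum_marg_sdiff_initSeg_le_div [DecidablePred M] {d : ℝ}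
    (hM_ground : ∀ S, M S → S ⊆ N) (hM_down : ∀ S T : Finset α, M T → S ⊆ T → M S)
    (hM_aug : ∀ S T : Finset α, M S → M T → S.card < T.card → ∃ x ∈ T \ S, M (insert x S))
    (hZ_submod : ∀ S T : Finset α, ∀ x, S ⊆ T → T ⊆ N → x ∈ N → x ∉ T →
      Z (insert x T) - Z T ≤ Z (insert x S) - Z S)
    (hg : Set.InjOn g (Set.Icc 1 K)) (hG : M (initSeg g K)) (hd : 0 < d)
    (hdisc : ∀ i ∈ Finset.Icc 1 K,
      K - i + 1 < ((N \ initSeg g (i - 1)).filter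
        fun x => M (insert x (initSeg g (i - 1)))).card →
      ∀ x ∈ N, x ∉ initSeg g (i - 1) → x ≠ g i →
      M (insert x (initSeg g (i - 1))) →
      d * marg Z x (initSeg g (i - 1)) ≤ marg Z (g i) (initSeg g (i - 1)))
    {T : Finset α} (hT : M T) (hTcard : #T = K) :
    ∑ w ∈ T \ initSeg g K, marg Z w (initSeg g K) ≤
      (∑ i ∈ Icc 1 K with g i ∉ T, marg Z (g i) (initSeg g (i - 1))) / d := by
  obtain ⟨σ, hσ, hσP, hσM⟩ := exists_exchange_injOn hM_aug hM_down hg hG hT hTcard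
  rw [← hσP, sum_image hσ, sum_div]
  refine sum_le_sum fun i hi => (le_div_iff₀' hd).2 ?_
  have hi' := (mem_filter.1 hi).1
  obtain ⟨hσT, hσG⟩ := mem_sdiff.1 (hσP ▸ mem_image_of_mem σ hi)
  have hσN := hM_ground T hT hσT
  have hIG : initSeg g (i - 1) ⊆ initSeg g K := initSeg_mono g (by simp at hi'; omega)
  calc d * marg Z (σ i) (initSeg g K) ≤ d * marg Z (σ i) (initSeg g (i - 1)) :=
        mul_le_mul_of_nonneg_left (hZ_submod _ _ _ hIG (hM_ground _ hG) hσN hσG) hd.le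
    _ ≤ _ := hdisc i hi'
        (lt_card_filter_insert_initSeg hM_ground hM_down hg hG hi' hσN hσG (hσM i hi))
        _ hσN (fun h => hσG (hIG h)) (fun h => hσG (h ▸ mem_image_of_mem g hi')) (hσM i hi)

end Greedy

end

theorem greedy_discriminant_approx_general {α : Type*} [DecidableEq α]
    (N : Finset α) (M : Finset α → Prop)
    (hM_ground : ∀ S, M S → S ⊆ N)
    (hM_down : ∀ S T : Finset α, M T → S ⊆ T → M S)
    (hM_aug : ∀ S T : Finset α, M S → M T → S.card < T.card → ∃ x ∈ T \ S, M (insert x S))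
    [DecidablePred M]
    (K : ℕ) (hK_le : ∀ S, M S → S.card ≤ K)
    (Z : Finset α → ℝ)
    (hZ_mono : ∀ S T : Finset α, S ⊆ T → T ⊆ N → Z S ≤ Z T)
    (hZ_submod : ∀ S T : Finset α, ∀ x, S ⊆ T → T ⊆ N → x ∈ N → x ∉ T →
      Z (insert x T) - Z T ≤ Z (insert x S) - Z S)
    (hZ_empty : Z ∅ = 0)
    (c : ℝ) (hc1 : c ≤ 1)
    (hcurv : ∀ S ⊆ N, ∀ j ∈ N, j ∉ S → 0 < marg Z j (∅ : Finset α) →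
      (1 - c) * marg Z j (∅ : Finset α) ≤ marg Z j S)
    (g : ℕ → α) (hg_inj : Set.InjOn g (Set.Icc 1 K)) (hG_M : M (initSeg g K))
    (d : ℝ) (hd : 1 ≤ d)
    (hdisc : ∀ i ∈ Finset.Icc 1 K,
      K - i + 1 < ((N \ initSeg g (i - 1)).filter
        fun x => M (insert x (initSeg g (i - 1)))).card →
      ∀ x ∈ N, x ∉ initSeg g (i - 1) → x ≠ g i →
      M (insert x (initSeg g (i - 1))) →
      d * marg Z x (initSeg g (i - 1)) ≤ marg Z (g i) (initSeg g (i - 1))) :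
    ∀ Ω : Finset α, M Ω → Z Ω ≤ max 1 (c + 1 / d) * Z (initSeg g K) := by
  intro Ω hΩ
  have hGN := hM_ground _ hG_M
  have hGcard := card_initSeg hg_inj (le_refl K)
  obtain ⟨T, hΩT, -, hTcard, hT⟩ :=
    exists_superset_subset_union_card_eq hM_aug hΩ hG_M ((hK_le Ω hΩ).trans hGcard.ge)
  have hTN := hM_ground T hT
  set s := ∑ i ∈ Icc 1 K with g i ∉ T, marg Z (g i) (initSeg g (i - 1))
  have hgain : ∑ w ∈ T \ initSeg g K, marg Z w (initSeg g K) ≤ s / d :=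
    sum_marg_sdiff_initSeg_le_div hM_ground hM_down hM_aug hZ_submod hg_inj hG_M (by linarith)
      hdisc hT (hTcard.trans hGcard)
  have hloss : s ≤ ∑ w ∈ initSeg g K \ T, marg Z w ∅ :=
    sum_marg_le_sum_marg_empty hZ_submod hg_inj hGN T
  have hs : 0 ≤ s := sum_nonneg fun i hi =>
    marg_initSeg_pred_nonneg hZ_mono hGN (mem_filter.1 hi).1
  refine le_max_one_mul_of_le_add_sub_one_mul ?_ hs
    (sum_marg_initSeg_le hZ_mono hZ_empty hGN (filter_subset _ _))
  calc Z Ω ≤ Z T := hZ_mono Ω T hΩT hTN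
    _ ≤ _ := le_add_sum_marg_sub_mul_sum_marg_empty hZ_mono hZ_submod hc1 hcurv hGN hTN
    _ ≤ Z (initSeg g K) + s / d - (1 - c) * s := by gcongr
    _ = Z (initSeg g K) + (c + 1 / d - 1) * s := by ring

/-- Discriminant-and-curvature guarantee for the greedy algorithm over
a matroid: `Z(Ω) ≤ max(1, c + 1/d)·Z(G)` whenever `d` lower bounds all discriminants at
iterations `i` with more than `K − i + 1` feasible elements remaining. -/
theorem greedy_discriminant_approx {α : Type*} [DecidableEq α]
    (N : Finset α) (M : Finset α → Prop)
    (hM_ground : ∀ S, M S → S ⊆ N) (hM_empty : M ∅)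
    (hM_down : ∀ S T : Finset α, M T → S ⊆ T → M S)
    (hM_aug : ∀ S T : Finset α, M S → M T → S.card < T.card → ∃ x ∈ T \ S, M (insert x S))
    [DecidablePred M]
    (K : ℕ) (hK_le : ∀ S, M S → S.card ≤ K) (hK_ex : ∃ B, M B ∧ B.card = K)
    (Z : Finset α → ℝ)
    (hZ_mono : ∀ S T : Finset α, S ⊆ T → T ⊆ N → Z S ≤ Z T)
    (hZ_submod : ∀ S T : Finset α, ∀ x, S ⊆ T → T ⊆ N → x ∈ N → x ∉ T →
      Z (insert x T) - Z T ≤ Z (insert x S) - Z S)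
    (hZ_empty : Z ∅ = 0)
    (c : ℝ) (hc0 : 0 ≤ c) (hc1 : c ≤ 1)
    (hcurv : ∀ S ⊆ N, ∀ j ∈ N, j ∉ S → 0 < marg Z j (∅ : Finset α) →
      (1 - c) * marg Z j (∅ : Finset α) ≤ marg Z j S)
    (g : ℕ → α) (hg_inj : Set.InjOn g (Set.Icc 1 K)) (hG_M : M (initSeg g K))
    (hg_max : ∀ i ∈ Finset.Icc 1 K, ∀ x ∈ N, x ∉ initSeg g (i - 1) →
      M (insert x (initSeg g (i - 1))) →
      marg Z x (initSeg g (i - 1)) ≤ marg Z (g i) (initSeg g (i - 1)))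
    (d : ℝ) (hd : 1 ≤ d)
    (hdisc : ∀ i ∈ Finset.Icc 1 K,
      K - i + 1 < ((N \ initSeg g (i - 1)).filter
        fun x => M (insert x (initSeg g (i - 1)))).card →
      ∀ x ∈ N, x ∉ initSeg g (i - 1) → x ≠ g i →
      M (insert x (initSeg g (i - 1))) →
      d * marg Z x (initSeg g (i - 1)) ≤ marg Z (g i) (initSeg g (i - 1))) :
    ∀ Ω : Finset α, M Ω → Z Ω ≤ max 1 (c + 1 / d) * Z (initSeg g K) :=
  greedy_discriminant_approx_general N M hM_ground hM_down hM_aug K hK_le Z hZ_mono hZ_submod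
    hZ_empty c hc1 hcurv g hg_inj hG_M d hd hdisc
end

section
/- Let U be a finite set of users and R a finite set of n resources with monotone, submodular, normalized valuations Z_u for each u ∈ U, and let the resources arrive in an arbitrary fixed order r_1, …, r_n. Let u_1, …, u_n be an online greedy allocation with partial allocations G^t, output G, and increments ρ_t = ρ^{u_t}_{r_t}(G^{t−1}). For each t ∈ {1,…,n} let c_t ∈ [0,1] be a curvature bound for Z_{u_t}, and let d_t ≥ 1 be a real number such that d_t·ρ^{u'}_{r_t}(G^{t−1}) ≤ ρ_t for every user u' ∈ U ∖ {u_t} (so d_t is a lower bound on the online discriminant at time t). Set Λ = max_{1 ≤ t ≤ n} (c_t + 1/d_t). Then for every full allocation Ω, max(1, Λ)·Z(G) ≥ Z(Ω); equivalently, Z(G)/Z(Ω) ≥ min(1, 1/Λ) whenever Z(Ω) > 0. -/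
open Finset

/-- The set of resources allocated to user `u` by the allocation `S`. -/
def allocOf {β γ : Type*} [DecidableEq β] [DecidableEq γ]
    (S : Finset (β × γ)) (u : β) : Finset γ :=
  (S.filter fun p => p.1 = u).image Prod.snd

/-- Total valuation `Z(S) = Σ_{u ∈ U} Z_u(S_u)`. -/
def totalVal {β γ : Type*} [DecidableEq β] [DecidableEq γ]
    (U : Finset β) (Zu : β → Finset γ → ℝ) (S : Finset (β × γ)) : ℝ :=
  ∑ u ∈ U, Zu u (allocOf S u)

/-- Marginal gain `ρ^u_r(S) = Z_u(S_u ∪ {r}) − Z_u(S_u)`. -/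
def margP {β γ : Type*} [DecidableEq β] [DecidableEq γ]
    (Zu : β → Finset γ → ℝ) (u : β) (r : γ) (S : Finset (β × γ)) : ℝ :=
  Zu u (insert r (allocOf S u)) - Zu u (allocOf S u)

/-- The partial allocation `{(u 1, r 1), …, (u i, r i)}`. -/
def gAlloc {β γ : Type*} [DecidableEq β] [DecidableEq γ]
    (u : ℕ → β) (r : ℕ → γ) (i : ℕ) : Finset (β × γ) :=
  (Finset.Icc 1 i).image fun j => (u j, r j)

/-- A partial allocation: each resource occurs in at most one pair. -/
def IsPartialAlloc {β γ : Type*} (U : Finset β) (R : Finset γ) (S : Finset (β × γ)) : Prop :=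
  (∀ p ∈ S, p.1 ∈ U ∧ p.2 ∈ R) ∧ ∀ p ∈ S, ∀ q ∈ S, p.2 = q.2 → p = q

/-- A full allocation: every resource occurs in exactly one pair. -/
def IsFullAlloc {β γ : Type*} (U : Finset β) (R : Finset γ) (S : Finset (β × γ)) : Prop :=
  IsPartialAlloc U R S ∧ ∀ r ∈ R, ∃ u, (u, r) ∈ S

/-!
Interpolate between `Ω` and the greedy output `G` through the hybrid allocations `H_t`, which
give `r_1, …, r_t` to the greedy users and `r_{t+1}, …, r_n` to their owners `w` in `Ω`.
Passing from `H_{t-1}` to `H_t` moves `r_t` from `w_t` to `u_t`: by submodularity `w_t` loses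
at most `ρ^{w_t}_{r_t}(G^{t-1}) ≤ ρ_t / d_t`, and by the curvature bound `u_t` gains at least
`(1 - c_t) ρ_t`. Each step therefore costs at most `(max(1, Λ) - 1) ρ_t`, and `Z(G) = Σ_t ρ_t`.
-/

section SetFunction

variable {γ : Type*} [DecidableEq γ]

def MonotoneBelow (R : Finset γ) (f : Finset γ → ℝ) : Prop :=
  ∀ S T : Finset γ, S ⊆ T → T ⊆ R → f S ≤ f T

def SubmodularBelow (R : Finset γ) (f : Finset γ → ℝ) : Prop :=
  ∀ S T : Finset γ, ∀ x, S ⊆ T → T ⊆ R → x ∈ R → x ∉ T →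
    f (insert x T) - f T ≤ f (insert x S) - f S

def HasCurvatureBound (R : Finset γ) (f : Finset γ → ℝ) (c : ℝ) : Prop :=
  ∀ S ⊆ R, ∀ x ∈ R, x ∉ S → 0 < f {x} → (1 - c) * f {x} ≤ f (insert x S) - f S

variable {R A B : Finset γ} {f : Finset γ → ℝ} {x : γ}

lemma MonotoneBelow.marginal_nonneg (hf : MonotoneBelow R f) (hA : A ⊆ R)
    (hx : x ∈ R) : 0 ≤ f (insert x A) - f A :=
  sub_nonneg.mpr (hf A _ (subset_insert x A) (insert_subset hx hA))

lemma SubmodularBelow.marginal_le_singleton (hf : SubmodularBelow R f) (h0 : f ∅ = 0)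
    (hA : A ⊆ R) (hx : x ∈ R) (hxA : x ∉ A) : f (insert x A) - f A ≤ f {x} := by
  simpa [h0] using hf ∅ A x (empty_subset A) hA hx hxA

lemma HasCurvatureBound.mul_marginal_le {c : ℝ} (hcurv : HasCurvatureBound R f c) (hc : c ≤ 1)
    (hmono : MonotoneBelow R f) (hsub : SubmodularBelow R f) (h0 : f ∅ = 0)
    (hA : A ⊆ R) (hB : B ⊆ R) (hx : x ∈ R) (hxA : x ∉ A) (hxB : x ∉ B) :
    (1 - c) * (f (insert x A) - f A) ≤ f (insert x B) - f B := by
  have hle := hsub.marginal_le_singleton h0 hA hx hxA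
  by_cases hpos : 0 < f {x}
  · calc (1 - c) * (f (insert x A) - f A) ≤ (1 - c) * f {x} :=
          mul_le_mul_of_nonneg_left hle (by linarith)
      _ ≤ f (insert x B) - f B := hcurv B hB x hx hxB hpos
  · have hB0 := hmono.marginal_nonneg hB hx
    nlinarith

end SetFunction

section Allocation

variable {β γ : Type*} [DecidableEq β] [DecidableEq γ]

lemma mem_allocOf {S : Finset (β × γ)} {v : β} {x : γ} :
    x ∈ allocOf S v ↔ (v, x) ∈ S := by
  simp [allocOf]

lemma allocOf_mono {S T : Finset (β × γ)} (h : S ⊆ T) (v : β) : allocOf S v ⊆ allocOf T v :=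
  fun _ hx => mem_allocOf.mpr (h (mem_allocOf.mp hx))

lemma allocOf_insert (S : Finset (β × γ)) (a v : β) (x : γ) :
    allocOf (insert (a, x) S) v = if v = a then insert x (allocOf S v) else allocOf S v := by
  ext y
  split_ifs with h <;> simp [mem_allocOf, h]

lemma totalVal_insert {U : Finset β} (Z : β → Finset γ → ℝ) (S : Finset (β × γ))
    {a : β} (ha : a ∈ U) (x : γ) :
    totalVal U Z (insert (a, x) S) = totalVal U Z S + margP Z a x S := by
  have hterm : ∀ v ∈ U, Z v (allocOf (insert (a, x) S) v) =
      Z v (allocOf S v) + if v = a then margP Z a x S else 0 := by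
    intro v _
    rw [allocOf_insert]
    split_ifs with h
    · subst h; rw [margP]; ring
    · rw [add_zero]
  rw [totalVal, sum_congr rfl hterm, sum_add_distrib, sum_ite_eq' U a, if_pos ha, totalVal]

lemma allocOf_image_subset {ι : Type*} (I : Finset ι) (σ : ι → β) (r : ι → γ) (v : β) :
    allocOf (I.image fun i => (σ i, r i)) v ⊆ I.image r := by
  intro x hx
  obtain ⟨i, hi, hix⟩ := mem_image.mp (mem_allocOf.mp hx)
  exact mem_image.mpr ⟨i, hi, congrArg Prod.snd hix⟩

lemma IsFullAlloc.exists_eq_image [Nonempty β] {ι : Type*} {U : Finset β} {R : Finset γ}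
    {Ω : Finset (β × γ)} {I : Finset ι} {r : ι → γ} (hΩ : IsFullAlloc U R Ω)
    (hR : I.image r = R) :
    ∃ w : ι → β, (∀ i ∈ I, w i ∈ U) ∧ Ω = I.image fun i => (w i, r i) := by
  obtain ⟨⟨hmem, huniq⟩, hfull⟩ := hΩ
  have hex : ∀ i, ∃ v, i ∈ I → (v, r i) ∈ Ω := by
    intro i
    by_cases hi : i ∈ I
    · obtain ⟨v, hv⟩ := hfull (r i) (hR ▸ mem_image_of_mem r hi)
      exact ⟨v, fun _ => hv⟩
    · exact ⟨Classical.arbitrary β, fun h => absurd h hi⟩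
  choose w hw using hex
  refine ⟨w, fun i hi => (hmem _ (hw i hi)).1, ?_⟩
  ext ⟨v, x⟩
  constructor
  · intro h
    obtain ⟨i, hi, rfl⟩ := mem_image.mp (hR ▸ (hmem _ h).2 : x ∈ I.image r)
    exact mem_image.mpr ⟨i, hi, huniq _ (hw i hi) _ h rfl⟩
  · intro h
    obtain ⟨i, hi, hix⟩ := mem_image.mp h
    exact hix ▸ hw i hi

end Allocation

section Greedy

variable {β γ : Type*} [DecidableEq β] [DecidableEq γ]

lemma margP_sub_margP_le {Z : β → Finset γ → ℝ} {R : Finset γ} {a b : β} {x : γ}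
    {S T : Finset (β × γ)} {c d Λ : ℝ}
    (ha : SubmodularBelow R (Z a)) (hb_mono : MonotoneBelow R (Z b))
    (hb_sub : SubmodularBelow R (Z b)) (hb0 : Z b ∅ = 0) (hcurv : HasCurvatureBound R (Z b) c)
    (hc : c ≤ 1) (hd : 1 ≤ d) (hdisc : a ≠ b → d * margP Z a x S ≤ margP Z b x S)
    (hΛ : c + 1 / d ≤ Λ) (hST : S ⊆ T) (hTR : ∀ v, allocOf T v ⊆ R) (hx : x ∈ R)
    (hxT : ∀ v, x ∉ allocOf T v) :
    margP Z a x T - margP Z b x T ≤ (max 1 Λ - 1) * margP Z b x S := by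
  have hSR v : allocOf S v ⊆ R := (allocOf_mono hST v).trans (hTR v)
  have hxS v : x ∉ allocOf S v := fun h => hxT v (allocOf_mono hST v h)
  have hρ : 0 ≤ margP Z b x S := hb_mono.marginal_nonneg (hSR b) hx
  have hM : 0 ≤ max 1 Λ - 1 := sub_nonneg.mpr (le_max_left 1 Λ)
  obtain rfl | hab := eq_or_ne a b
  · simpa using mul_nonneg hM hρ
  have hloss : margP Z a x T ≤ margP Z b x S / d := by
    have hsub : margP Z a x T ≤ margP Z a x S :=
      ha _ _ x (allocOf_mono hST a) (hTR a) hx (hxT a)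
    rw [le_div_iff₀ (by linarith), mul_comm]
    exact (mul_le_mul_of_nonneg_left hsub (by linarith)).trans (hdisc hab)
  have hgain : (1 - c) * margP Z b x S ≤ margP Z b x T :=
    hcurv.mul_marginal_le hc hb_mono hb_sub hb0 (hSR b) (hTR b) hx (hxS b) (hxT b)
  calc margP Z a x T - margP Z b x T ≤ (c + 1 / d - 1) * margP Z b x S := by
        rw [div_eq_mul_one_div] at hloss; nlinarith
    _ ≤ (max 1 Λ - 1) * margP Z b x S := by
        gcongr
        exact hΛ.trans (le_max_right 1 Λ)

lemma gAlloc_eq_insert (u : ℕ → β) (r : ℕ → γ) {t : ℕ} (ht : 1 ≤ t) :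
    gAlloc u r t = insert (u t, r t) (gAlloc u r (t - 1)) := by
  rw [gAlloc, gAlloc, ← insert_Icc_sub_one_right_eq_Icc ht, image_insert]

lemma sum_Icc_sub_pred (f : ℕ → ℝ) (n : ℕ) :
    ∑ t ∈ Icc 1 n, (f (t - 1) - f t) = f 0 - f n := by
  induction n with
  | zero => simp
  | succ n ih => rw [sum_Icc_succ_top (by omega), ih, Nat.add_sub_cancel]; ring

lemma totalVal_gAlloc_eq_sum {U : Finset β} {Z : β → Finset γ → ℝ}
    (hzero : ∀ v ∈ U, Z v ∅ = 0) {u : ℕ → β} (r : ℕ → γ) {n : ℕ}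
    (hu : ∀ t ∈ Icc 1 n, u t ∈ U) :
    totalVal U Z (gAlloc u r n) = ∑ t ∈ Icc 1 n, margP Z (u t) (r t) (gAlloc u r (t - 1)) := by
  have hstep : ∀ t ∈ Icc 1 n, margP Z (u t) (r t) (gAlloc u r (t - 1)) =
      -(totalVal U Z (gAlloc u r (t - 1)) - totalVal U Z (gAlloc u r t)) := by
    intro t ht
    rw [gAlloc_eq_insert u r (mem_Icc.mp ht).1, totalVal_insert Z _ (hu t ht)]
    ring
  have h0 : totalVal U Z (gAlloc u r 0) = 0 :=
    sum_eq_zero fun v hv => by simpa [gAlloc, allocOf] using hzero v hv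
  rw [sum_congr rfl hstep, sum_neg_distrib,
    sum_Icc_sub_pred (fun t => totalVal U Z (gAlloc u r t)), h0]
  ring

def hybridAlloc (u w : ℕ → β) (r : ℕ → γ) (I : Finset ℕ) (t : ℕ) :
    Finset (β × γ) :=
  I.image fun s => (if s ≤ t then u s else w s, r s)

variable (u w : ℕ → β) (r : ℕ → γ) {I : Finset ℕ} {t : ℕ}

lemma hybridAlloc_eq_insert (ht : t ∈ I) :
    hybridAlloc u w r I t = insert (u t, r t) (hybridAlloc u w r (I.erase t) t) := by
  rw [hybridAlloc, ← insert_erase ht, image_insert, erase_insert (notMem_erase t I),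
    if_pos le_rfl, hybridAlloc]

lemma hybridAlloc_pred_eq_insert (ht : t ∈ I) (ht1 : 1 ≤ t) :
    hybridAlloc u w r I (t - 1) = insert (w t, r t) (hybridAlloc u w r (I.erase t) t) := by
  rw [hybridAlloc, ← insert_erase ht, image_insert, erase_insert (notMem_erase t I),
    if_neg (by omega), hybridAlloc]
  congr 1
  refine image_congr fun s hs => ?_
  have : s ≠ t := ne_of_mem_erase hs
  exact congrArg (·, r s) (if_congr (by omega) rfl rfl)

lemma gAlloc_subset_hybridAlloc {n : ℕ} (htn : t ≤ n) :
    gAlloc u r (t - 1) ⊆ hybridAlloc u w r ((Icc 1 n).erase t) t := by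
  intro p hp
  obtain ⟨s, hs, rfl⟩ := mem_image.mp hp
  have hs := mem_Icc.mp hs
  exact mem_image.mpr ⟨s, mem_erase.mpr ⟨by omega, mem_Icc.mpr ⟨hs.1, by omega⟩⟩, by
    rw [if_pos (by omega)]⟩

lemma totalVal_hybridAlloc_pred_sub {U : Finset β} (Z : β → Finset γ → ℝ) (ht : t ∈ I)
    (ht1 : 1 ≤ t) (hu : u t ∈ U) (hw : w t ∈ U) :
    totalVal U Z (hybridAlloc u w r I (t - 1)) - totalVal U Z (hybridAlloc u w r I t) =
      margP Z (w t) (r t) (hybridAlloc u w r (I.erase t) t) -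
        margP Z (u t) (r t) (hybridAlloc u w r (I.erase t) t) := by
  rw [hybridAlloc_pred_eq_insert u w r ht ht1, hybridAlloc_eq_insert u w r ht,
    totalVal_insert Z _ hw, totalVal_insert Z _ hu, add_sub_add_left_eq_sub]

lemma allocOf_hybridAlloc_subset (v : β) : allocOf (hybridAlloc u w r I t) v ⊆ I.image r :=
  allocOf_image_subset I _ r v

lemma notMem_allocOf_hybridAlloc_erase (hr : Set.InjOn r I) (ht : t ∈ I) (v : β) :
    r t ∉ allocOf (hybridAlloc u w r (I.erase t) t) v := fun h => by
  obtain ⟨s, hs, hst⟩ := mem_image.mp (allocOf_hybridAlloc_subset u w r v h)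
  exact ne_of_mem_erase hs (hr (mem_of_mem_erase hs) ht hst)

end Greedy

theorem online_greedy_partition_discriminant_approx_general {β γ : Type*} [DecidableEq β] [DecidableEq γ]
    (U : Finset β) (R : Finset γ) (n : ℕ)
    (Zu : β → Finset γ → ℝ)
    (hmono : ∀ u ∈ U, ∀ S T : Finset γ, S ⊆ T → T ⊆ R → Zu u S ≤ Zu u T)
    (hsubmod : ∀ u ∈ U, ∀ S T : Finset γ, ∀ x, S ⊆ T → T ⊆ R → x ∈ R → x ∉ T →
      Zu u (insert x T) - Zu u T ≤ Zu u (insert x S) - Zu u S)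
    (hzero : ∀ u ∈ U, Zu u (∅ : Finset γ) = 0)
    (u : ℕ → β) (r : ℕ → γ)
    (hu_mem : ∀ t ∈ Finset.Icc 1 n, u t ∈ U)
    (hr_inj : Set.InjOn r (Set.Icc 1 n)) (hr_img : (Finset.Icc 1 n).image r = R)
    (c : ℕ → ℝ) (hc : ∀ i ∈ Finset.Icc 1 n, 0 ≤ c i ∧ c i ≤ 1)
    (hcurv : ∀ i ∈ Finset.Icc 1 n, ∀ S ⊆ R, ∀ x ∈ R, x ∉ S → 0 < Zu (u i) {x} →
      (1 - c i) * Zu (u i) {x} ≤ Zu (u i) (insert x S) - Zu (u i) S)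
    (d : ℕ → ℝ) (hd : ∀ i ∈ Finset.Icc 1 n, 1 ≤ d i)
    (hdisc : ∀ i ∈ Finset.Icc 1 n, ∀ u' ∈ U, u' ≠ u i →
      d i * margP Zu u' (r i) (gAlloc u r (i - 1)) ≤
        margP Zu (u i) (r i) (gAlloc u r (i - 1)))
    (Λ : ℝ) (hΛ : ∀ i ∈ Finset.Icc 1 n, c i + 1 / d i ≤ Λ)
 :
    ∀ Ω : Finset (β × γ), IsFullAlloc U R Ω →
      totalVal U Zu Ω ≤ max 1 Λ * totalVal U Zu (gAlloc u r n) := by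
  intro Ω hΩ
  have : Nonempty β := ⟨u 0⟩
  obtain ⟨w, hwU, rfl⟩ := hΩ.exists_eq_image hr_img
  have hstep : ∀ t ∈ Icc 1 n, totalVal U Zu (hybridAlloc u w r (Icc 1 n) (t - 1)) -
      totalVal U Zu (hybridAlloc u w r (Icc 1 n) t) ≤
        (max 1 Λ - 1) * margP Zu (u t) (r t) (gAlloc u r (t - 1)) := by
    intro t ht
    obtain ⟨ht1, htn⟩ := mem_Icc.mp ht
    rw [totalVal_hybridAlloc_pred_sub u w r Zu ht ht1 (hu_mem t ht) (hwU t ht)]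
    exact margP_sub_margP_le (hsubmod _ (hwU t ht)) (hmono _ (hu_mem t ht))
      (hsubmod _ (hu_mem t ht)) (hzero _ (hu_mem t ht)) (hcurv t ht) (hc t ht).2 (hd t ht)
      (hdisc t ht _ (hwU t ht)) (hΛ t ht) (gAlloc_subset_hybridAlloc u w r htn)
      (fun v => (allocOf_hybridAlloc_subset u w r v).trans
        (hr_img ▸ image_subset_image (erase_subset t _)))
      (hr_img ▸ mem_image_of_mem r ht)
      (notMem_allocOf_hybridAlloc_erase u w r (coe_Icc 1 n ▸ hr_inj) ht)
  have hH0 : (Icc 1 n).image (fun s => (w s, r s)) = hybridAlloc u w r (Icc 1 n) 0 :=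
    image_congr fun s hs => by simp [Nat.one_le_iff_ne_zero.mp (mem_Icc.mp hs).1]
  have hHn : hybridAlloc u w r (Icc 1 n) n = gAlloc u r n :=
    image_congr fun s hs => by simp [(mem_Icc.mp hs).2]
  rw [hH0]
  calc totalVal U Zu (hybridAlloc u w r (Icc 1 n) 0)
      = totalVal U Zu (hybridAlloc u w r (Icc 1 n) n) + ∑ t ∈ Icc 1 n,
          (totalVal U Zu (hybridAlloc u w r (Icc 1 n) (t - 1)) -
            totalVal U Zu (hybridAlloc u w r (Icc 1 n) t)) := by
        rw [sum_Icc_sub_pred (fun t => totalVal U Zu (hybridAlloc u w r (Icc 1 n) t))]; ring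
    _ ≤ totalVal U Zu (gAlloc u r n) +
          ∑ t ∈ Icc 1 n, (max 1 Λ - 1) * margP Zu (u t) (r t) (gAlloc u r (t - 1)) := by
        rw [hHn]; gcongr with t ht; exact hstep t ht
    _ = max 1 Λ * totalVal U Zu (gAlloc u r n) := by
        rw [← mul_sum, ← totalVal_gAlloc_eq_sum hzero r hu_mem]; ring

/-- Discriminant-and-curvature competitive ratio for online greedy on the
submodular partition problem: `Z(Ω) ≤ max(1, Λ)·Z(G)` where `Λ ≥ c_t + 1/d_t` for all `t`. -/
theorem online_greedy_partition_discriminant_approx {β γ : Type*} [DecidableEq β] [DecidableEq γ]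
    (U : Finset β) (R : Finset γ) (n : ℕ) (hn : R.card = n)
    (Zu : β → Finset γ → ℝ)
    (hmono : ∀ u ∈ U, ∀ S T : Finset γ, S ⊆ T → T ⊆ R → Zu u S ≤ Zu u T)
    (hsubmod : ∀ u ∈ U, ∀ S T : Finset γ, ∀ x, S ⊆ T → T ⊆ R → x ∈ R → x ∉ T →
      Zu u (insert x T) - Zu u T ≤ Zu u (insert x S) - Zu u S)
    (hzero : ∀ u ∈ U, Zu u (∅ : Finset γ) = 0)
    (u : ℕ → β) (r : ℕ → γ)
    (hu_mem : ∀ t ∈ Finset.Icc 1 n, u t ∈ U)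
    (hr_inj : Set.InjOn r (Set.Icc 1 n)) (hr_img : (Finset.Icc 1 n).image r = R)
    (hgreedy : ∀ t ∈ Finset.Icc 1 n, ∀ u' ∈ U,
      margP Zu u' (r t) (gAlloc u r (t - 1)) ≤ margP Zu (u t) (r t) (gAlloc u r (t - 1)))
    (c : ℕ → ℝ) (hc : ∀ i ∈ Finset.Icc 1 n, 0 ≤ c i ∧ c i ≤ 1)
    (hcurv : ∀ i ∈ Finset.Icc 1 n, ∀ S ⊆ R, ∀ x ∈ R, x ∉ S → 0 < Zu (u i) {x} →
      (1 - c i) * Zu (u i) {x} ≤ Zu (u i) (insert x S) - Zu (u i) S)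
    (d : ℕ → ℝ) (hd : ∀ i ∈ Finset.Icc 1 n, 1 ≤ d i)
    (hdisc : ∀ i ∈ Finset.Icc 1 n, ∀ u' ∈ U, u' ≠ u i →
      d i * margP Zu u' (r i) (gAlloc u r (i - 1)) ≤
        margP Zu (u i) (r i) (gAlloc u r (i - 1)))
    (Λ : ℝ) (hΛ : ∀ i ∈ Finset.Icc 1 n, c i + 1 / d i ≤ Λ)
 :
    ∀ Ω : Finset (β × γ), IsFullAlloc U R Ω →
      totalVal U Zu Ω ≤ max 1 Λ * totalVal U Zu (gAlloc u r n) :=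
  online_greedy_partition_discriminant_approx_general U R n Zu hmono hsubmod hzero u r hu_mem hr_inj
    hr_img c hc hcurv d hd hdisc Λ hΛ
end
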